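/- The spectral norm of the even-r Kikuchi matrix of λ·v^{⊗r} for v ∈ {±1}^n is at least λ · C(n-ℓ, r/2) · C(ℓ, r/2), when λ ≥ 0, r even, r ≤ 2ℓ, ℓ + r/2 ≤ n. -/

import Mathlib

open Finset Matrix
open scoped symmDiff

/-!
Since `v i ^ 2 = 1`, we have `ṽ[J] = ṽ[I] · ∏_{i ∈ I Δ J} v i`, so row `I` of `M ṽ` is `λ ṽ[I]`
times the number of `ℓ`-sets `J` with `|I Δ J| = r = 2s`. Such a `J` is obtained by removing `s`
elements of `I` and adding `s` elements outside `I`, so `ṽ` is an eigenvector with eigenvalue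
`λ · C(ℓ, s) · C(n - ℓ, s)`, which bounds the operator norm from below.
-/

namespace Finset

variable {ι : Type*} [DecidableEq ι]

theorem prod_mul_prod_eq_prod_symmDiff {M : Type*} [CommMonoid M] {f : ι → M}
    (hf : ∀ i, f i * f i = 1) (s t : Finset ι) :
    (∏ i ∈ s, f i) * ∏ i ∈ t, f i = ∏ i ∈ s ∆ t, f i := by
  calc (∏ i ∈ s, f i) * ∏ i ∈ t, f i
      = (∏ i ∈ s ∪ t, f i) * ∏ i ∈ s ∩ t, f i := prod_union_inter.symm
    _ = (∏ i ∈ (s ∪ t) \ (s ∩ t), f i) * ∏ i ∈ s ∩ t, f i * f i := by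
      rw [← prod_sdiff inter_subset_union, prod_mul_distrib, mul_assoc]
    _ = ∏ i ∈ s ∆ t, f i := by
      rw [prod_congr rfl fun i _ => hf i, prod_const_one, mul_one, symmDiff_eq_sup_sdiff_inf]
      rfl

theorem sdiff_symmDiff_union {I A B : Finset ι} (hAI : A ⊆ I) (hBI : Disjoint B I) :
    I \ (I ∆ (A ∪ B)) = A := by
  rw [sdiff_symmDiff_left, inf_eq_inter, inter_union_distrib_left, inter_eq_right.mpr hAI,
    disjoint_iff_inter_eq_empty.mp hBI.symm, union_empty]

theorem symmDiff_union_sdiff {I A B : Finset ι} (hAI : A ⊆ I) (hBI : Disjoint B I) :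
    (I ∆ (A ∪ B)) \ I = B := by
  rw [symmDiff_sdiff_left, union_sdiff_distrib, sdiff_eq_empty_iff_subset.mpr hAI, empty_union,
    sdiff_eq_self_of_disjoint hBI]

theorem card_filter_powersetCard_card_symmDiff [Fintype ι] (I : Finset ι) (s : ℕ) :
    #{J ∈ powersetCard #I univ | #(I ∆ J) = 2 * s} =
      (#I).choose s * (Fintype.card ι - #I).choose s := by
  rw [← card_compl, ← card_powersetCard, ← card_powersetCard, ← card_product]
  refine card_nbij' (fun J => (I \ J, J \ I)) (fun p => I ∆ (p.1 ∪ p.2)) ?_ ?_ ?_ ?_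
  · intro J hJ
    simp only [mem_coe, mem_filter, mem_powersetCard, subset_univ, true_and] at hJ
    have hsymm : #(I ∆ J) = #(I \ J) + #(J \ I) := card_union_of_disjoint disjoint_sdiff_sdiff
    have hcomm : #(I \ J) = #(J \ I) := card_sdiff_comm hJ.1.symm
    simp only [mem_coe, mem_product, mem_powersetCard, subset_compl_iff_disjoint_right]
    exact ⟨⟨sdiff_subset, by omega⟩, sdiff_disjoint, by omega⟩
  · rintro ⟨A, B⟩ hAB
    simp only [mem_coe, mem_product, mem_powersetCard, subset_compl_iff_disjoint_right] at hAB
    obtain ⟨⟨hAI, hA⟩, hBI, hB⟩ := hAB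
    simp only [mem_coe, mem_filter, mem_powersetCard, subset_univ, true_and,
      symmDiff_symmDiff_cancel_left]
    have hleft := card_sdiff_add_card I (I ∆ (A ∪ B))
    have hright := card_sdiff_add_card (I ∆ (A ∪ B)) I
    rw [sdiff_symmDiff_union hAI hBI] at hleft
    rw [symmDiff_union_sdiff hAI hBI, union_comm] at hright
    rw [card_union_of_disjoint (hBI.symm.mono_left hAI)]
    omega
  · intro J _
    exact symmDiff_symmDiff_cancel_left I J
  · rintro ⟨A, B⟩ hAB
    simp only [mem_coe, mem_product, mem_powersetCard, subset_compl_iff_disjoint_right] at hAB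
    obtain ⟨⟨hAI, -⟩, hBI, -⟩ := hAB
    simp only [sdiff_symmDiff_union hAI hBI, symmDiff_union_sdiff hAI hBI]

end Finset

theorem ContinuousLinearMap.norm_le_opNorm_of_apply_eq_smul {𝕜 E : Type*}
    [NontriviallyNormedField 𝕜] [NormedAddCommGroup E] [NormedSpace 𝕜 E] (T : E →L[𝕜] E)
    {x : E} (hx : x ≠ 0) {c : 𝕜} (h : T x = c • x) : ‖c‖ ≤ ‖T‖ := by
  have hle := T.le_opNorm x
  rw [h, norm_smul] at hle
  exact le_of_mul_le_mul_right hle (norm_pos_iff.mpr hx)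

theorem Matrix.mulVec_prod_eq_smul_of_symmDiff {ι R : Type*} [Fintype ι] [DecidableEq ι]
    [CommRing R] {ℓ s : ℕ} {lam : R} {v : ι → R} (hv : ∀ i, v i * v i = 1)
    {M : Matrix {I : Finset ι // #I = ℓ} {I : Finset ι // #I = ℓ} R}
    (hM : ∀ I J, M I J = if #(I.1 ∆ J.1) = 2 * s then lam * ∏ i ∈ I.1 ∆ J.1, v i else 0) :
    M *ᵥ (fun J => ∏ i ∈ J.1, v i) =
      (lam * (ℓ.choose s * (Fintype.card ι - ℓ).choose s)) • fun J => ∏ i ∈ J.1, v i := by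
  funext I
  have hterm : ∀ J, M I J * ∏ i ∈ J.1, v i =
      if #(I.1 ∆ J.1) = 2 * s then lam * ∏ i ∈ I.1, v i else 0 := by
    intro J
    rw [hM]
    split_ifs
    · rw [mul_assoc, prod_mul_prod_eq_prod_symmDiff hv, symmDiff_symmDiff_cancel_right]
    · rw [zero_mul]
  simp only [mulVec, dotProduct, hterm, Pi.smul_apply, smul_eq_mul]
  rw [← sum_subtype (powersetCard ℓ univ) (by simp)
    (fun J => if #(I.1 ∆ J) = 2 * s then lam * ∏ i ∈ I.1, v i else 0)]
  rw [sum_ite, sum_const_zero, add_zero, sum_const, nsmul_eq_mul]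
  obtain ⟨I, rfl⟩ := I
  rw [card_filter_powersetCard_card_symmDiff]
  push_cast
  ring

theorem kikuchi_rank_one_spectral_lower_bound_general (n ℓ r : ℕ) (hr : Even r)
    (hn : ℓ + r / 2 ≤ n) (lam : ℝ)
    (v : Fin n → ℝ) (hv : ∀ i, v i = 1 ∨ v i = -1)
    (M : Matrix {I : Finset (Fin n) // I.card = ℓ} {I : Finset (Fin n) // I.card = ℓ} ℝ)
    (hM : ∀ I J, M I J =
      if (symmDiff I.1 J.1).card = r then lam * ∏ i ∈ symmDiff I.1 J.1, v i else 0) :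
    lam * ((n - ℓ).choose (r / 2) * ℓ.choose (r / 2)) ≤
      ‖(Matrix.toEuclideanLin M).toContinuousLinearMap‖ := by
  obtain ⟨s, rfl⟩ := hr
  rw [show (s + s) / 2 = s by omega]
  have hv_sq : ∀ i, v i * v i = 1 := fun i => by rcases hv i with h | h <;> simp [h]
  set w : EuclideanSpace ℝ {I : Finset (Fin n) // #I = ℓ} := WithLp.toLp 2 fun J => ∏ i ∈ J.1, v i
  have hw : w ≠ 0 := by
    obtain ⟨J, -, hJ⟩ := exists_subset_card_eq (s := (univ : Finset (Fin n))) (n := ℓ)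
      (by simp only [card_univ, Fintype.card_fin]; omega)
    intro h
    have hJ0 := congrArg (fun x => x ⟨J, hJ⟩) h
    simp only [w, PiLp.zero_apply, prod_eq_zero_iff] at hJ0
    obtain ⟨i, -, hi⟩ := hJ0
    simpa [hi] using hv_sq i
  have hM' : ∀ I J, M I J =
      if #(I.1 ∆ J.1) = 2 * s then lam * ∏ i ∈ I.1 ∆ J.1, v i else 0 := by
    simpa only [two_mul] using hM
  have heig : (Matrix.toEuclideanLin M).toContinuousLinearMap w =
      (lam * (ℓ.choose s * (n - ℓ).choose s)) • w := by
    change WithLp.toLp 2 (M *ᵥ fun J => ∏ i ∈ J.1, v i) = _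
    rw [mulVec_prod_eq_smul_of_symmDiff hv_sq hM', Fintype.card_fin]
    rfl
  calc lam * ((n - ℓ).choose s * ℓ.choose s)
      ≤ ‖lam * (ℓ.choose s * (n - ℓ).choose s : ℝ)‖ := by
        rw [mul_comm ((n - ℓ).choose s : ℝ)]; exact Real.le_norm_self _
    _ ≤ _ := ContinuousLinearMap.norm_le_opNorm_of_apply_eq_smul _ hw heig

/-- The spectral norm (Euclidean operator norm) of the even-`r` Kikuchi matrix of
`λ·v^{⊗r}` for `v ∈ {±1}^n` is at least `λ · C(n-ℓ, r/2) · C(ℓ, r/2)`. -/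
theorem kikuchi_rank_one_spectral_lower_bound (n ℓ r : ℕ) (hr : Even r)
    (hrℓ : r ≤ 2 * ℓ) (hn : ℓ + r / 2 ≤ n) (lam : ℝ) (hlam : 0 ≤ lam)
    (v : Fin n → ℝ) (hv : ∀ i, v i = 1 ∨ v i = -1)
    (M : Matrix {I : Finset (Fin n) // I.card = ℓ} {I : Finset (Fin n) // I.card = ℓ} ℝ)
    (hM : ∀ I J, M I J =
      if (symmDiff I.1 J.1).card = r then lam * ∏ i ∈ symmDiff I.1 J.1, v i else 0) :
    lam * ((n - ℓ).choose (r / 2) * ℓ.choose (r / 2)) ≤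
      ‖(Matrix.toEuclideanLin M).toContinuousLinearMap‖ :=
  kikuchi_rank_one_spectral_lower_bound_general n ℓ r hr hn lam v hv M hM
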